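/- For the scalar ODE q' = f(q) with smooth f, the two-stage scheme Qⁿ⁺¹ = Qⁿ + Δt·f(Qⁿ) + (Δt²/6)(g(Qⁿ) + 2g(Q*)), with g(q) = f'(q)f(q) and Q* = Qⁿ + (Δt/2)f(Qⁿ) + (Δt²/8)g(Qⁿ), has local truncation error O(Δt⁵): if q(t) is the exact solution with q(tⁿ) = Qⁿ, then |q(tⁿ+Δt) − Qⁿ⁺¹| ≤ C·Δt⁵ for Δt small. -/

import Mathlib

open scoped ContDiff

private lemma s2o4_one_le : (1 : WithTop ℕ∞) ≤ ∞ := by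
  exact_mod_cast (le_top : (1:ℕ∞) ≤ ⊤)

private lemma s2o4_ne_zero : (∞ : WithTop ℕ∞) ≠ 0 := by simp

private lemma s2o4_mvt_step {E E' : ℝ → ℝ} {M : ℝ} {n : ℕ}
    (hM : 0 ≤ M) (hd : ∀ x, HasDerivAt E (E' x) x) (h0 : E 0 = 0)
    (hb : ∀ s : ℝ, 0 ≤ s → s ≤ 1 → |E' s| ≤ M * s ^ n) :
    ∀ t : ℝ, 0 ≤ t → t ≤ 1 → |E t| ≤ M * t ^ (n + 1) := by
  intro t ht ht1
  have key : ‖E t - E 0‖ ≤ (M * t ^ n) * ‖t - (0:ℝ)‖ := by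
    refine Convex.norm_image_sub_le_of_norm_hasDerivWithin_le
      (f' := E') (fun x _ => (hd x).hasDerivWithinAt) (fun x hx => ?_)
      (convex_Icc 0 t) (Set.left_mem_Icc.2 ht) (Set.right_mem_Icc.2 ht)
    have hx0 : 0 ≤ x := hx.1
    have hxt : x ≤ t := hx.2
    calc ‖E' x‖ = |E' x| := rfl
      _ ≤ M * x ^ n := hb x hx0 (hxt.trans ht1)
      _ ≤ M * t ^ n := mul_le_mul_of_nonneg_left (pow_le_pow_left₀ hx0 hxt n) hM
  rw [h0, sub_zero, sub_zero] at key
  calc |E t| = ‖E t‖ := rfl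
    _ ≤ (M * t ^ n) * ‖t‖ := key
    _ = M * t ^ (n + 1) := by rw [Real.norm_eq_abs, abs_of_nonneg ht]; ring

private lemma s2o4_auxE (E0 E1 E2 E3 E4 E5 : ℝ → ℝ)
    (h0 : ∀ x, HasDerivAt E0 (E1 x) x) (h1 : ∀ x, HasDerivAt E1 (E2 x) x)
    (h2 : ∀ x, HasDerivAt E2 (E3 x) x) (h3 : ∀ x, HasDerivAt E3 (E4 x) x)
    (h4 : ∀ x, HasDerivAt E4 (E5 x) x) (hc : Continuous E5)
    (v0 : E0 0 = 0) (v1 : E1 0 = 0) (v2 : E2 0 = 0) (v3 : E3 0 = 0) (v4 : E4 0 = 0) :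
    ∃ C > 0, ∃ δ > 0, ∀ t : ℝ, 0 < t → t < δ → |E0 t| ≤ C * t ^ 5 := by
  obtain ⟨M, hM⟩ := (isCompact_Icc (a := (0:ℝ)) (b := 1)).exists_bound_of_continuousOn
    hc.continuousOn
  have hM'0 : (0:ℝ) ≤ max M 0 := le_max_right _ _
  have b5 : ∀ s : ℝ, 0 ≤ s → 1 ≥ s → |E5 s| ≤ max M 0 * s ^ 0 := by
    intro s hs hs1
    rw [pow_zero, mul_one]
    exact (hM s ⟨hs, hs1⟩).trans (le_max_left _ _)
  have b4 := s2o4_mvt_step hM'0 h4 v4 fun s hs hs1 => b5 s hs hs1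
  have b3 := s2o4_mvt_step hM'0 h3 v3 b4
  have b2 := s2o4_mvt_step hM'0 h2 v2 b3
  have b1 := s2o4_mvt_step hM'0 h1 v1 b2
  have b0 := s2o4_mvt_step hM'0 h0 v0 b1
  refine ⟨max M 0 + 1, by positivity, 1, one_pos, fun t ht ht1 => ?_⟩
  have hb := b0 t ht.le ht1.le
  have h5 : (0:ℝ) < t ^ 5 := pow_pos ht 5
  calc |E0 t| ≤ max M 0 * t ^ (0+1+1+1+1+1) := hb
    _ = max M 0 * t ^ 5 := by norm_num
    _ ≤ (max M 0 + 1) * t ^ 5 := by nlinarith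


private lemma s2o4_auxF (f : ℝ → ℝ) (hf : ContDiff ℝ ∞ f)
    (g : ℝ → ℝ) (hg : ∀ x, g x = deriv f x * f x)
    (q : ℝ → ℝ) (hq : ∀ t, HasDerivAt q (f (q t)) t) (tn : ℝ) :
    ∃ F1 F2 F3 F4 F5 : ℝ → ℝ,
      (∀ x, HasDerivAt (fun y => q (tn + y)) (F1 x) x) ∧
      (∀ x, HasDerivAt F1 (F2 x) x) ∧ (∀ x, HasDerivAt F2 (F3 x) x) ∧
      (∀ x, HasDerivAt F3 (F4 x) x) ∧ (∀ x, HasDerivAt F4 (F5 x) x) ∧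
      Continuous F5 ∧
      F1 0 = f (q tn) ∧ F2 0 = g (q tn) ∧
      F3 0 = deriv g (q tn) * f (q tn) ∧
      F4 0 = deriv (deriv g) (q tn) * f (q tn) * f (q tn)
          + deriv g (q tn) * (deriv f (q tn) * f (q tn)) := by
  have hfd : Differentiable ℝ f := hf.differentiable s2o4_ne_zero
  have hd1 : ContDiff ℝ ∞ (deriv f) := (contDiff_infty_iff_deriv.mp hf).2
  have hgeq : g = fun y => deriv f y * f y := funext hg
  have hgs : ContDiff ℝ ∞ g := by rw [hgeq]; exact hd1.mul hf
  have hgd : Differentiable ℝ g := hgs.differentiable s2o4_ne_zero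
  have hg1s : ContDiff ℝ ∞ (deriv g) := (contDiff_infty_iff_deriv.mp hgs).2
  have hg1d : Differentiable ℝ (deriv g) := hg1s.differentiable s2o4_ne_zero
  have hg2s : ContDiff ℝ ∞ (deriv (deriv g)) := (contDiff_infty_iff_deriv.mp hg1s).2
  -- the flow and its derivative
  have hF : ∀ x : ℝ, HasDerivAt (fun y => q (tn + y)) (f (q (tn + x))) x := by
    intro x
    have h1 : HasDerivAt (fun y : ℝ => tn + y) 1 x := by
      simpa using (hasDerivAt_id x).const_add tn
    simpa [Function.comp_def] using (hq (tn + x)).comp x h1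
  have hqd : Differentiable ℝ (fun y => q (tn + y)) := fun x => (hF x).differentiableAt
  have hFc : Continuous (fun y => q (tn + y)) := hqd.continuous
  -- the auxiliary smooth function A
  set A : ℝ → ℝ := fun y => deriv (deriv g) y * f y * f y
      + deriv g y * (deriv f y * f y) with hA
  have hAs : ContDiff ℝ ∞ A := ((hg2s.mul hf).mul hf).add (hg1s.mul (hd1.mul hf))
  have hAd : Differentiable ℝ A := hAs.differentiable s2o4_ne_zero
  refine ⟨fun x => f (q (tn + x)), fun x => g (q (tn + x)),
    fun x => deriv g (q (tn + x)) * f (q (tn + x)),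
    fun x => A (q (tn + x)),
    fun x => deriv A (q (tn + x)) * f (q (tn + x)),
    hF, ?_, ?_, ?_, ?_, ?_, ?_, ?_, ?_, ?_⟩
  · intro x
    have := ((hfd (q (tn + x))).hasDerivAt).comp x (hF x)
    show HasDerivAt (fun y => f (q (tn + y))) (g (q (tn + x))) x
    rw [hg]
    simpa [Function.comp_def] using this
  · intro x
    simpa [Function.comp_def] using ((hgd (q (tn + x))).hasDerivAt).comp x (hF x)
  · intro x
    have h1 : HasDerivAt (fun y => deriv g (q (tn + y)))
        (deriv (deriv g) (q (tn + x)) * f (q (tn + x))) x := by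
      simpa [Function.comp_def] using ((hg1d (q (tn + x))).hasDerivAt).comp x (hF x)
    have h2 : HasDerivAt (fun y => f (q (tn + y)))
        (deriv f (q (tn + x)) * f (q (tn + x))) x := by
      simpa [Function.comp_def] using ((hfd (q (tn + x))).hasDerivAt).comp x (hF x)
    exact h1.mul h2
  · intro x
    simpa [Function.comp_def] using ((hAd (q (tn + x))).hasDerivAt).comp x (hF x)
  · exact ((hAs.continuous_deriv s2o4_one_le).comp hFc).mul (hf.continuous.comp hFc)
  · norm_num
  · norm_num
  · norm_num
  · simp [hA]



set_option maxHeartbeats 2000000 in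
private lemma s2o4_auxS (g : ℝ → ℝ) (hgs : ContDiff ℝ ∞ g) (Q A B : ℝ) :
    ∃ S1 S2 S3 S4 S5 : ℝ → ℝ,
      (∀ x, HasDerivAt (fun x => Q + x * A + x ^ 2 / 6 * (B + 2 * g (Q + x / 2 * A + x ^ 2 / 8 * B))) (S1 x) x) ∧
      (∀ x, HasDerivAt S1 (S2 x) x) ∧ (∀ x, HasDerivAt S2 (S3 x) x) ∧
      (∀ x, HasDerivAt S3 (S4 x) x) ∧ (∀ x, HasDerivAt S4 (S5 x) x) ∧
      Continuous S5 ∧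
      S1 0 = A ∧ S2 0 = B / 3 + 2 / 3 * g Q ∧ S3 0 = deriv g Q * A ∧
      S4 0 = deriv (deriv g) Q * A ^ 2 + deriv g Q * B := by
  have hgd : Differentiable ℝ g := hgs.differentiable s2o4_ne_zero
  have hg1s : ContDiff ℝ ∞ (deriv g) := (contDiff_infty_iff_deriv.mp hgs).2
  have hg1d : Differentiable ℝ (deriv g) := hg1s.differentiable s2o4_ne_zero
  have hg2s : ContDiff ℝ ∞ (deriv (deriv g)) := (contDiff_infty_iff_deriv.mp hg1s).2
  have hg2d : Differentiable ℝ (deriv (deriv g)) := hg2s.differentiable s2o4_ne_zero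
  have hg3s : ContDiff ℝ ∞ (deriv (deriv (deriv g))) := (contDiff_infty_iff_deriv.mp hg2s).2
  have hg3d : Differentiable ℝ (deriv (deriv (deriv g))) := hg3s.differentiable s2o4_ne_zero
  have hg4s : ContDiff ℝ ∞ (deriv (deriv (deriv (deriv g)))) :=
    (contDiff_infty_iff_deriv.mp hg3s).2
  have hg4d : Differentiable ℝ (deriv (deriv (deriv (deriv g)))) :=
    hg4s.differentiable s2o4_ne_zero
  -- derivative of P
  have hP : ∀ x : ℝ, HasDerivAt (fun y => Q + y / 2 * A + y ^ 2 / 8 * B) ((A / 2 + x * (B / 4))) x := by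
    intro x
    have raw := (((hasDerivAt_const x Q).add
        (((hasDerivAt_id x).div_const 2).mul_const A)).add
        (((hasDerivAt_pow 2 x).div_const 8).mul_const B))
    refine raw.congr_deriv ?_
    first
    | simp only [id_eq]
    | skip
    push_cast
    ring
  -- derivative of Pd
  have hPd : ∀ x : ℝ, HasDerivAt (fun y => (A / 2 + y * (B / 4))) (B / 4) x := by
    intro x
    have raw := (hasDerivAt_const x (A / 2)).add ((hasDerivAt_id x).mul_const (B / 4))
    refine raw.congr_deriv ?_
    first
    | simp only [id_eq]
    | skip
    ring
  -- compositions with P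
  have hgP : ∀ x : ℝ, HasDerivAt (fun y => g (Q + y / 2 * A + y ^ 2 / 8 * B)) (deriv g (Q + x / 2 * A + x ^ 2 / 8 * B) * (A / 2 + x * (B / 4))) x :=
    fun x => ((hgd _).hasDerivAt).comp x (hP x)
  have hg1P : ∀ x : ℝ, HasDerivAt (fun y => deriv g (Q + y / 2 * A + y ^ 2 / 8 * B))
      (deriv (deriv g) (Q + x / 2 * A + x ^ 2 / 8 * B) * (A / 2 + x * (B / 4))) x :=
    fun x => ((hg1d _).hasDerivAt).comp x (hP x)
  have hg2P : ∀ x : ℝ, HasDerivAt (fun y => deriv (deriv g) (Q + y / 2 * A + y ^ 2 / 8 * B))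
      (deriv (deriv (deriv g)) (Q + x / 2 * A + x ^ 2 / 8 * B) * (A / 2 + x * (B / 4))) x :=
    fun x => ((hg2d _).hasDerivAt).comp x (hP x)
  have hg3P : ∀ x : ℝ, HasDerivAt (fun y => deriv (deriv (deriv g)) (Q + y / 2 * A + y ^ 2 / 8 * B))
      (deriv (deriv (deriv (deriv g))) (Q + x / 2 * A + x ^ 2 / 8 * B) * (A / 2 + x * (B / 4))) x :=
    fun x => ((hg3d _).hasDerivAt).comp x (hP x)
  -- derivatives of u1 u2 u3
  have hu1 : ∀ x : ℝ, HasDerivAt (fun y => deriv g (Q + y / 2 * A + y ^ 2 / 8 * B) * (A / 2 + y * (B / 4))) (deriv (deriv g) (Q + x / 2 * A + x ^ 2 / 8 * B) * (A / 2 + x * (B / 4)) ^ 2 + deriv g (Q + x / 2 * A + x ^ 2 / 8 * B) * (B / 4)) x := by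
    intro x
    have raw := (hg1P x).mul (hPd x)
    refine raw.congr_deriv ?_
    first
    | simp only [id_eq]
    | skip
    ring
  have hu2 : ∀ x : ℝ, HasDerivAt (fun y => deriv (deriv g) (Q + y / 2 * A + y ^ 2 / 8 * B) * (A / 2 + y * (B / 4)) ^ 2 + deriv g (Q + y / 2 * A + y ^ 2 / 8 * B) * (B / 4)) (deriv (deriv (deriv g)) (Q + x / 2 * A + x ^ 2 / 8 * B) * (A / 2 + x * (B / 4)) ^ 3 + 3 * deriv (deriv g) (Q + x / 2 * A + x ^ 2 / 8 * B) * (A / 2 + x * (B / 4)) * (B / 4)) x := by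
    intro x
    have raw := ((hg2P x).mul ((hPd x).pow 2)).add ((hg1P x).mul_const (B / 4))
    refine raw.congr_deriv ?_
    first
    | simp only [id_eq, Pi.pow_apply]
    | skip
    push_cast
    ring
  have hu3 : ∀ x : ℝ, HasDerivAt (fun y => deriv (deriv (deriv g)) (Q + y / 2 * A + y ^ 2 / 8 * B) * (A / 2 + y * (B / 4)) ^ 3 + 3 * deriv (deriv g) (Q + y / 2 * A + y ^ 2 / 8 * B) * (A / 2 + y * (B / 4)) * (B / 4)) (deriv (deriv (deriv (deriv g))) (Q + x / 2 * A + x ^ 2 / 8 * B) * (A / 2 + x * (B / 4)) ^ 4 + 6 * deriv (deriv (deriv g)) (Q + x / 2 * A + x ^ 2 / 8 * B) * (A / 2 + x * (B / 4)) ^ 2 * (B / 4) + 3 * deriv (deriv g) (Q + x / 2 * A + x ^ 2 / 8 * B) * (B / 4) ^ 2) x := by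
    intro x
    have raw := ((hg3P x).mul ((hPd x).pow 3)).add
      ((((hg2P x).const_mul 3).mul (hPd x)).mul_const (B / 4))
    refine raw.congr_deriv ?_
    first
    | simp only [id_eq, Pi.pow_apply]
    | skip
    push_cast
    ring
  -- smoothness of auxiliary functions
  have hPs : ContDiff ℝ ∞ (fun y : ℝ => Q + y / 2 * A + y ^ 2 / 8 * B) := by
    apply ContDiff.add
    apply ContDiff.add contDiff_const
    · exact (contDiff_id.div_const 2).mul contDiff_const
    · exact ((contDiff_id.pow 2).div_const 8).mul contDiff_const
  have hPds : ContDiff ℝ ∞ (fun y : ℝ => (A / 2 + y * (B / 4))) :=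
    contDiff_const.add (contDiff_id.mul contDiff_const)
  have hu3s : ContDiff ℝ ∞ (fun y => deriv (deriv (deriv g)) (Q + y / 2 * A + y ^ 2 / 8 * B) * (A / 2 + y * (B / 4)) ^ 3 + 3 * deriv (deriv g) (Q + y / 2 * A + y ^ 2 / 8 * B) * (A / 2 + y * (B / 4)) * (B / 4)) := by
    apply ContDiff.add
    · exact (hg3s.comp hPs).mul (hPds.pow 3)
    · exact ((contDiff_const.mul (hg2s.comp hPs)).mul hPds).mul contDiff_const
  have hu4s : ContDiff ℝ ∞ (fun y => deriv (deriv (deriv (deriv g))) (Q + y / 2 * A + y ^ 2 / 8 * B) * (A / 2 + y * (B / 4)) ^ 4 + 6 * deriv (deriv (deriv g)) (Q + y / 2 * A + y ^ 2 / 8 * B) * (A / 2 + y * (B / 4)) ^ 2 * (B / 4) + 3 * deriv (deriv g) (Q + y / 2 * A + y ^ 2 / 8 * B) * (B / 4) ^ 2) := by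
    apply ContDiff.add
    apply ContDiff.add
    · exact (hg4s.comp hPs).mul (hPds.pow 4)
    · exact ((contDiff_const.mul (hg3s.comp hPs)).mul (hPds.pow 2)).mul contDiff_const
    · exact (contDiff_const.mul (hg2s.comp hPs)).mul contDiff_const
  have hu4 : ∀ x : ℝ, HasDerivAt (fun y => deriv (deriv (deriv (deriv g))) (Q + y / 2 * A + y ^ 2 / 8 * B) * (A / 2 + y * (B / 4)) ^ 4 + 6 * deriv (deriv (deriv g)) (Q + y / 2 * A + y ^ 2 / 8 * B) * (A / 2 + y * (B / 4)) ^ 2 * (B / 4) + 3 * deriv (deriv g) (Q + y / 2 * A + y ^ 2 / 8 * B) * (B / 4) ^ 2) (deriv (fun y => deriv (deriv (deriv (deriv g))) (Q + y / 2 * A + y ^ 2 / 8 * B) * (A / 2 + y * (B / 4)) ^ 4 + 6 * deriv (deriv (deriv g)) (Q + y / 2 * A + y ^ 2 / 8 * B) * (A / 2 + y * (B / 4)) ^ 2 * (B / 4) + 3 * deriv (deriv g) (Q + y / 2 * A + y ^ 2 / 8 * B) * (B / 4) ^ 2) x) x :=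
    fun x => ((hu4s.differentiable s2o4_ne_zero) x).hasDerivAt
  refine ⟨fun x => A + x / 3 * (B + 2 * g (Q + x / 2 * A + x ^ 2 / 8 * B)) + x ^ 2 / 3 * (deriv g (Q + x / 2 * A + x ^ 2 / 8 * B) * (A / 2 + x * (B / 4))), fun x => B / 3 + 2 / 3 * g (Q + x / 2 * A + x ^ 2 / 8 * B) + 4 / 3 * x * (deriv g (Q + x / 2 * A + x ^ 2 / 8 * B) * (A / 2 + x * (B / 4))) + 1 / 3 * x ^ 2 * (deriv (deriv g) (Q + x / 2 * A + x ^ 2 / 8 * B) * (A / 2 + x * (B / 4)) ^ 2 + deriv g (Q + x / 2 * A + x ^ 2 / 8 * B) * (B / 4)), fun x => 2 * (deriv g (Q + x / 2 * A + x ^ 2 / 8 * B) * (A / 2 + x * (B / 4))) + 2 * x * (deriv (deriv g) (Q + x / 2 * A + x ^ 2 / 8 * B) * (A / 2 + x * (B / 4)) ^ 2 + deriv g (Q + x / 2 * A + x ^ 2 / 8 * B) * (B / 4)) + 1 / 3 * x ^ 2 * (deriv (deriv (deriv g)) (Q + x / 2 * A + x ^ 2 / 8 * B) * (A / 2 + x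 * (B / 4)) ^ 3 + 3 * deriv (deriv g) (Q + x / 2 * A + x ^ 2 / 8 * B) * (A / 2 + x * (B / 4)) * (B / 4)), fun x => 4 * (deriv (deriv g) (Q + x / 2 * A + x ^ 2 / 8 * B) * (A / 2 + x * (B / 4)) ^ 2 + deriv g (Q + x / 2 * A + x ^ 2 / 8 * B) * (B / 4)) + 8 / 3 * x * (deriv (deriv (deriv g)) (Q + x / 2 * A + x ^ 2 / 8 * B) * (A / 2 + x * (B / 4)) ^ 3 + 3 * deriv (deriv g) (Q + x / 2 * A + x ^ 2 / 8 * B) * (A / 2 + x * (B / 4)) * (B / 4)) + 1 / 3 * x ^ 2 * (deriv (deriv (deriv (deriv g))) (Q + x / 2 * A + x ^ 2 / 8 * B) * (A / 2 + x * (B / 4)) ^ 4 + 6 * deriv (deriv (deriv g)) (Q + x / 2 * A + x ^ 2 / 8 * B) * (A / 2 + x * (B / 4)) ^ 2 * (B / 4) + 3 * deriv (deriv g) (Q + x / 2 * A + x ^ 2 / 8 * B) * (B / 4) ^ 2), fun x => 20 / 3 * (deriv (deriv (deriv g)) (Q + x / 2 * A + x ^ 2 / 8 * B) * (A / 2 +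 x * (B / 4)) ^ 3 + 3 * deriv (deriv g) (Q + x / 2 * A + x ^ 2 / 8 * B) * (A / 2 + x * (B / 4)) * (B / 4)) + 10 / 3 * x * (deriv (deriv (deriv (deriv g))) (Q + x / 2 * A + x ^ 2 / 8 * B) * (A / 2 + x * (B / 4)) ^ 4 + 6 * deriv (deriv (deriv g)) (Q + x / 2 * A + x ^ 2 / 8 * B) * (A / 2 + x * (B / 4)) ^ 2 * (B / 4) + 3 * deriv (deriv g) (Q + x / 2 * A + x ^ 2 / 8 * B) * (B / 4) ^ 2) + 1 / 3 * x ^ 2 * deriv (fun y => deriv (deriv (deriv (deriv g))) (Q + y / 2 * A + y ^ 2 / 8 * B) * (A / 2 + y * (B / 4)) ^ 4 + 6 * deriv (deriv (deriv g)) (Q + y / 2 * A + y ^ 2 / 8 * B) * (A / 2 + y * (B / 4)) ^ 2 * (B / 4) + 3 * deriv (deriv g) (Q + y / 2 * A + y ^ 2 / 8 * B) * (B / 4) ^ 2) x, ?_, ?_, ?_, ?_, ?_, ?_, ?_, ?_, ?_, ?_⟩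
  · intro x
    have raw := (((hasDerivAt_const x Q).add ((hasDerivAt_id x).mul_const A)).add
      (((hasDerivAt_pow 2 x).div_const 6).mul (((hgP x).const_mul 2).const_add B)))
    refine raw.congr_deriv ?_
    first
    | simp only [id_eq]
    | skip
    push_cast
    ring
  · intro x
    have raw := (((hasDerivAt_const x A).add
      ((((hasDerivAt_id x).div_const 3).mul (((hgP x).const_mul 2).const_add B)))).add
      ((((hasDerivAt_pow 2 x).div_const 3).mul (hu1 x))))
    refine raw.congr_deriv ?_
    first
    | simp only [id_eq]
    | skip
    push_cast
    ring
  · intro x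
    have raw := ((((hasDerivAt_const x (B / 3)).add ((hgP x).const_mul (2 / 3))).add
      ((((hasDerivAt_id x).const_mul (4 / 3)).mul (hu1 x)))).add
      (((((hasDerivAt_pow 2 x).const_mul (1 / 3))).mul (hu2 x))))
    refine raw.congr_deriv ?_
    first
    | simp only [id_eq]
    | skip
    push_cast
    ring
  · intro x
    have raw := ((((hu1 x).const_mul 2).add
      ((((hasDerivAt_id x).const_mul 2).mul (hu2 x)))).add
      (((((hasDerivAt_pow 2 x).const_mul (1 / 3))).mul (hu3 x))))
    refine raw.congr_deriv ?_
    first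
    | simp only [id_eq]
    | skip
    push_cast
    ring
  · intro x
    have raw := ((((hu2 x).const_mul 4).add
      ((((hasDerivAt_id x).const_mul (8 / 3)).mul (hu3 x)))).add
      (((((hasDerivAt_pow 2 x).const_mul (1 / 3))).mul (hu4 x))))
    refine raw.congr_deriv ?_
    first
    | simp only [id_eq]
    | skip
    push_cast
    ring
  · -- continuity of S5
    have hu3c : Continuous (fun y => deriv (deriv (deriv g)) (Q + y / 2 * A + y ^ 2 / 8 * B) * (A / 2 + y * (B / 4)) ^ 3 + 3 * deriv (deriv g) (Q + y / 2 * A + y ^ 2 / 8 * B) * (A / 2 + y * (B / 4)) * (B / 4)) := hu3s.continuous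
    have hu4c : Continuous (fun y => deriv (deriv (deriv (deriv g))) (Q + y / 2 * A + y ^ 2 / 8 * B) * (A / 2 + y * (B / 4)) ^ 4 + 6 * deriv (deriv (deriv g)) (Q + y / 2 * A + y ^ 2 / 8 * B) * (A / 2 + y * (B / 4)) ^ 2 * (B / 4) + 3 * deriv (deriv g) (Q + y / 2 * A + y ^ 2 / 8 * B) * (B / 4) ^ 2) := hu4s.continuous
    have hdu4c : Continuous (deriv (fun y => deriv (deriv (deriv (deriv g))) (Q + y / 2 * A + y ^ 2 / 8 * B) * (A / 2 + y * (B / 4)) ^ 4 + 6 * deriv (deriv (deriv g)) (Q + y / 2 * A + y ^ 2 / 8 * B) * (A / 2 + y * (B / 4)) ^ 2 * (B / 4) + 3 * deriv (deriv g) (Q + y / 2 * A + y ^ 2 / 8 * B) * (B / 4) ^ 2)) := (contDiff_infty_iff_deriv.mp hu4s).2.continuous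
    exact ((continuous_const.mul hu3c).add
      ((continuous_const.mul continuous_id).mul hu4c)).add
      ((continuous_const.mul (continuous_pow 2)).mul hdu4c)
  · norm_num
  · norm_num
  · norm_num; ring
  · norm_num; ring

set_option maxHeartbeats 1000000 in
/-- Fourth-order accuracy (local truncation error `O(Δt⁵)`) of the two-stage
S2O4 scheme for `q' = f(q)` with smooth `f`, where `g(q) = f'(q) f(q)`:
`Q* = Qⁿ + (Δt/2) f(Qⁿ) + (Δt²/8) g(Qⁿ)`,
`Qⁿ⁺¹ = Qⁿ + Δt f(Qⁿ) + (Δt²/6)(g(Qⁿ) + 2 g(Q*))`. -/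
theorem s2o4_local_truncation_error
    (f : ℝ → ℝ) (hf : ContDiff ℝ (⊤ : ℕ∞) f)
    (q : ℝ → ℝ) (hq : ∀ t, HasDerivAt q (f (q t)) t)
    (tn Qn : ℝ) (hQn : q tn = Qn)
    (g : ℝ → ℝ) (hg : ∀ x, g x = deriv f x * f x) :
    ∃ C > 0, ∃ δ > 0, ∀ Δt : ℝ, 0 < Δt → Δt < δ →
      |q (tn + Δt) -
        (Qn + Δt * f Qn + (Δt ^ 2 / 6) *
          (g Qn + 2 * g (Qn + (Δt / 2) * f Qn + (Δt ^ 2 / 8) * g Qn)))|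
        ≤ C * Δt ^ 5 := by
  have hf' : ContDiff ℝ ∞ f := hf.of_le (by simp)
  have hd1 : ContDiff ℝ ∞ (deriv f) := (contDiff_infty_iff_deriv.mp hf').2
  have hgs : ContDiff ℝ ∞ g := by
    rw [funext hg]; exact hd1.mul hf'
  obtain ⟨F1, F2, F3, F4, F5, hF0, hF1, hF2, hF3, hF4, hF5c, vF1, vF2, vF3, vF4⟩ :=
    s2o4_auxF f hf' g hg q hq tn
  obtain ⟨S1, S2, S3, S4, S5, hS0, hS1, hS2, hS3, hS4, hS5c, vS1, vS2, vS3, vS4⟩ :=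
    s2o4_auxS g hgs Qn (f Qn) (g Qn)
  obtain ⟨C, hC, δ, hδ, H⟩ := s2o4_auxE
    (fun x => q (tn + x) -
      (Qn + x * f Qn + x ^ 2 / 6 *
        (g Qn + 2 * g (Qn + x / 2 * f Qn + x ^ 2 / 8 * g Qn))))
    (fun x => F1 x - S1 x) (fun x => F2 x - S2 x) (fun x => F3 x - S3 x)
    (fun x => F4 x - S4 x) (fun x => F5 x - S5 x)
    (fun x => (hF0 x).sub (hS0 x)) (fun x => (hF1 x).sub (hS1 x))
    (fun x => (hF2 x).sub (hS2 x)) (fun x => (hF3 x).sub (hS3 x))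
    (fun x => (hF4 x).sub (hS4 x)) (hF5c.sub hS5c)
    (by norm_num [hQn])
    (by show F1 0 - S1 0 = 0; rw [vF1, vS1, hQn]; ring)
    (by show F2 0 - S2 0 = 0; rw [vF2, vS2, hQn]; ring)
    (by show F3 0 - S3 0 = 0; rw [vF3, vS3, hQn]; ring)
    (by show F4 0 - S4 0 = 0; rw [vF4, vS4, hQn, hg Qn]; ring)
  refine ⟨C, hC, δ, hδ, fun Δt h1 h2 => ?_⟩
  have := H Δt h1 h2
  simpa using this
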